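/- arXiv:2004.00750 — 5 statements merged into one kernel-verified Lean document; each statement's English description precedes it below -/
import Mathlib

section
/- For any terrain with n points and any indices a < b < c < d in Fin n, if p_a and p_c see each other and p_b and p_d see each other, then p_a and p_d see each other. (Thus the visibility graph of any terrain satisfies the X-property.) -/
/-- `p j` is strictly below the segment `p i p k`. -/
def StrictlyBelow {n : ℕ} (x y : Fin n → ℝ) (i j k : Fin n) : Prop :=
  (x k - x j) * y i - (x k - x i) * y j + (x j - x i) * y k > 0

/-- `p j` is strictly above the segment `p i p k`. -/
def StrictlyAbove {n : ℕ} (x y : Fin n → ℝ) (i j k : Fin n) : Prop :=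
  (x k - x j) * y i - (x k - x i) * y j + (x j - x i) * y k < 0

/-- `p j` lies on or above the segment `p i p k`. -/
def OnOrAbove {n : ℕ} (x y : Fin n → ℝ) (i j k : Fin n) : Prop :=
  (x k - x j) * y i - (x k - x i) * y j + (x j - x i) * y k ≤ 0

/-- For `i < k`, the points `p i` and `p k` see each other. -/
def Sees {n : ℕ} (x y : Fin n → ℝ) (i k : Fin n) : Prop :=
  (k : ℕ) = (i : ℕ) + 1 ∨ ∀ j : Fin n, i < j → j < k → StrictlyBelow x y i j k

/-- The visibility graph of the terrain, as a symmetric relation. -/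
def VisGraph {n : ℕ} (x y : Fin n → ℝ) (i k : Fin n) : Prop :=
  (i < k ∧ Sees x y i k) ∨ (k < i ∧ Sees x y k i)

/-- The edges `{i,k}` (with `i < k`) of the graph `G'` on `{0,…,6}`. -/
def GpEdge (i k : ℕ) : Prop :=
  (i, k) ∈ [(0,1),(1,2),(2,3),(3,4),(4,5),(5,6),
            (0,3),(0,4),(0,5),(0,6),(1,3),(1,6),(2,6),(3,5),(3,6)]

/-!
Seeing `a`–`c` puts `p b` below `p a p c`, and seeing `b`–`d` puts `p c` below `p b p d`; so
`p a, p b, p c, p d` is a convex chain and `p b`, `p c` lie below `p a p d`. A point strictly between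
`a` and `c` lies below `p a p c`, hence below `p a p d`; a point from `c` up to `d` lies below
`p b p d`, hence below `p a p d`. The quantity in `StrictlyBelow` is the orientation determinant of
three points, and each of these transitivity steps is a linear identity between the four orientation
determinants of four points whose coefficients are differences of abscissae.
-/

namespace StrictlyBelow

variable {n : ℕ} {x y : Fin n → ℝ} {i j k l : Fin n}

theorem trans_left (hij : x i < x j) (hjk : x j < x k) (hkl : x k < x l)
    (hj : StrictlyBelow x y i j k) (hk : StrictlyBelow x y i k l) :
    StrictlyBelow x y i j l := by
  unfold StrictlyBelow at *
  have key : (x k - x i) * ((x l - x j) * y i - (x l - x i) * y j + (x j - x i) * y l)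
      = (x l - x i) * ((x k - x j) * y i - (x k - x i) * y j + (x j - x i) * y k)
        + (x j - x i) * ((x l - x k) * y i - (x l - x i) * y k + (x k - x i) * y l) := by
    ring
  have hpos : 0 < (x k - x i) * ((x l - x j) * y i - (x l - x i) * y j + (x j - x i) * y l) := by
    rw [key]
    exact add_pos (mul_pos (by linarith) hj) (mul_pos (by linarith) hk)
  exact pos_of_mul_pos_right hpos (by linarith)

theorem trans_right (hij : x i < x j) (hjk : x j < x k) (hkl : x k < x l)
    (hk : StrictlyBelow x y j k l) (hj : StrictlyBelow x y i j l) :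
    StrictlyBelow x y i k l := by
  unfold StrictlyBelow at *
  have key : (x l - x j) * ((x l - x k) * y i - (x l - x i) * y k + (x k - x i) * y l)
      = (x l - x i) * ((x l - x k) * y j - (x l - x j) * y k + (x k - x j) * y l)
        + (x l - x k) * ((x l - x j) * y i - (x l - x i) * y j + (x j - x i) * y l) := by
    ring
  have hpos : 0 < (x l - x j) * ((x l - x k) * y i - (x l - x i) * y k + (x k - x i) * y l) := by
    rw [key]
    exact add_pos (mul_pos (by linarith) hk) (mul_pos (by linarith) hj)
  exact pos_of_mul_pos_right hpos (by linarith)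

theorem of_convex_chain (hij : x i < x j) (hjk : x j < x k) (hkl : x k < x l)
    (hj : StrictlyBelow x y i j k) (hk : StrictlyBelow x y j k l) :
    StrictlyBelow x y i k l := by
  unfold StrictlyBelow at *
  have key : (x k - x j) * ((x l - x k) * y i - (x l - x i) * y k + (x k - x i) * y l)
      = (x l - x k) * ((x k - x j) * y i - (x k - x i) * y j + (x j - x i) * y k)
        + (x k - x i) * ((x l - x k) * y j - (x l - x j) * y k + (x k - x j) * y l) := by
    ring
  have hpos : 0 < (x k - x j) * ((x l - x k) * y i - (x l - x i) * y k + (x k - x i) * y l) := by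
    rw [key]
    exact add_pos (mul_pos (by linarith) hj) (mul_pos (by linarith) hk)
  exact pos_of_mul_pos_right hpos (by linarith)

end StrictlyBelow

theorem Sees.strictlyBelow {n : ℕ} {x y : Fin n → ℝ} {i j k : Fin n} (h : Sees x y i k)
    (hij : i < j) (hjk : j < k) : StrictlyBelow x y i j k := by
  refine h.resolve_left (fun hk => ?_) j hij hjk
  rw [Fin.lt_def] at hij hjk
  omega

theorem terrain_X_property {n : ℕ} (x y : Fin n → ℝ) (hx : StrictMono x)
    (a b c d : Fin n) (hab : a < b) (hbc : b < c) (hcd : c < d)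
    (hac : Sees x y a c) (hbd : Sees x y b d) :
    Sees x y a d := by
  have hb : StrictlyBelow x y a b c := hac.strictlyBelow hab hbc
  have hc : StrictlyBelow x y b c d := hbd.strictlyBelow hbc hcd
  have hc' : StrictlyBelow x y a c d := hb.of_convex_chain (hx hab) (hx hbc) (hx hcd) hc
  have hb' : StrictlyBelow x y a b d := hb.trans_left (hx hab) (hx hbc) (hx hcd) hc'
  refine Or.inr fun j haj hjd => ?_
  rcases lt_or_ge j c with hjc | hcj
  · exact (hac.strictlyBelow haj hjc).trans_left (hx haj) (hx hjc) (hx hcd) hc'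
  · have hbj : b < j := hbc.trans_le hcj
    exact (hbd.strictlyBelow hbj hjd).trans_right (hx hab) (hx hbj) (hx hjd) hb'
end

section
/- For any terrain with n points and any indices i, k in Fin n with i + 2 ≤ k, if p_i and p_k see each other then there exists j with i < j < k such that p_j sees p_i and p_j sees p_k. (Thus the visibility graph of any terrain satisfies the Bar-property.) -/
/-!
Among the points strictly between `p i` and `p k`, all strictly below the segment `p i p k`, take
a `p j` of least vertical distance from that segment. Every other point between them
then lies on or below the line through `p j` parallel to `p i p k`, so the points between `p i` and
`p j` lie strictly below the segment `p i p j`, and those between `p j` and `p k` strictly below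
`p j p k`.
-/

/-- `(x k - x i)` times the height of the segment `p i p k` above `p j`. -/
def depthBelow {n : ℕ} (x y : Fin n → ℝ) (i j k : Fin n) : ℝ :=
  (x k - x j) * y i - (x k - x i) * y j + (x j - x i) * y k

section DepthBelow

variable {n : ℕ} {x y : Fin n → ℝ} {i j k m : Fin n}

theorem strictlyBelow_iff_depthBelow_pos :
    StrictlyBelow x y i j k ↔ 0 < depthBelow x y i j k :=
  Iff.rfl

theorem depthBelow_mul_left (x y : Fin n → ℝ) (i m j k : Fin n) :
    depthBelow x y i m j * (x k - x i) =
      depthBelow x y i m k * (x j - x i) - depthBelow x y i j k * (x m - x i) := by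
  unfold depthBelow
  ring

theorem depthBelow_mul_right (x y : Fin n → ℝ) (i j m k : Fin n) :
    depthBelow x y j m k * (x k - x i) =
      depthBelow x y i m k * (x k - x j) - depthBelow x y i j k * (x k - x m) := by
  unfold depthBelow
  ring

theorem StrictlyBelow.of_depthBelow_le_left (hx : StrictMono x) (him : i < m) (hmj : m < j)
    (hjk : j < k) (hj : StrictlyBelow x y i j k)
    (hle : depthBelow x y i j k ≤ depthBelow x y i m k) :
    StrictlyBelow x y i m j := by
  rw [strictlyBelow_iff_depthBelow_pos] at hj ⊢
  have hxij : 0 ≤ x j - x i := sub_nonneg.mpr (hx (him.trans hmj)).le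
  have hxmj : 0 < x j - x m := sub_pos.mpr (hx hmj)
  have hxik : 0 < x k - x i := sub_pos.mpr (hx ((him.trans hmj).trans hjk))
  have hprod : 0 < depthBelow x y i m j * (x k - x i) := by
    rw [depthBelow_mul_left]
    nlinarith [mul_le_mul_of_nonneg_right hle hxij, mul_pos hj hxmj]
  exact pos_of_mul_pos_left hprod hxik.le

theorem StrictlyBelow.of_depthBelow_le_right (hx : StrictMono x) (hij : i < j) (hjm : j < m)
    (hmk : m < k) (hj : StrictlyBelow x y i j k)
    (hle : depthBelow x y i j k ≤ depthBelow x y i m k) :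
    StrictlyBelow x y j m k := by
  rw [strictlyBelow_iff_depthBelow_pos] at hj ⊢
  have hxjk : 0 ≤ x k - x j := sub_nonneg.mpr (hx (hjm.trans hmk)).le
  have hxjm : 0 < x m - x j := sub_pos.mpr (hx hjm)
  have hxik : 0 < x k - x i := sub_pos.mpr (hx ((hij.trans hjm).trans hmk))
  have hprod : 0 < depthBelow x y j m k * (x k - x i) := by
    rw [depthBelow_mul_right]
    nlinarith [mul_le_mul_of_nonneg_right hle hxjk, mul_pos hj hxjm]
  exact pos_of_mul_pos_left hprod hxik.le

end DepthBelow

theorem terrain_Bar_property {n : ℕ} (x y : Fin n → ℝ) (hx : StrictMono x)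
    (i k : Fin n) (hik : (i : ℕ) + 2 ≤ (k : ℕ)) (hsee : Sees x y i k) :
    ∃ j : Fin n, i < j ∧ j < k ∧ Sees x y i j ∧ Sees x y j k := by
  have hbelow : ∀ j, i < j → j < k → StrictlyBelow x y i j k :=
    hsee.resolve_left (by omega)
  have hne : (Finset.Ioo i k).Nonempty :=
    ⟨⟨i + 1, by omega⟩, Finset.mem_Ioo.mpr
      ⟨Fin.lt_def.mpr (Nat.lt_succ_self _), Fin.lt_def.mpr (show (i : ℕ) + 1 < k by omega)⟩⟩
  obtain ⟨j, hj, hmin⟩ := (Finset.Ioo i k).exists_min_image (depthBelow x y i · k) hne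
  obtain ⟨hij, hjk⟩ := Finset.mem_Ioo.mp hj
  have hj_below := hbelow j hij hjk
  refine ⟨j, hij, hjk, Or.inr fun m him hmj => ?_, Or.inr fun m hjm hmk => ?_⟩
  · exact hj_below.of_depthBelow_le_left hx him hmj hjk
      (hmin m (Finset.mem_Ioo.mpr ⟨him, hmj.trans hjk⟩))
  · exact hj_below.of_depthBelow_le_right hx hij hjm hmk
      (hmin m (Finset.mem_Ioo.mpr ⟨hij.trans hjm, hmk⟩))
end

section
/- Let a terrain with n points be given and let i, k be indices with i + 2 ≤ k such that p_i and p_k do NOT see each other. Let j be the largest index with i < j < k such that p_i sees p_j (it exists since j = i+1 qualifies), and let j' be the smallest index with i < j' < k such that p_{j'} sees p_k (it exists since j' = k−1 qualifies). Then p_j lies on or above the segment p_i p_k, and p_{j'} lies on or above the segment p_i p_k. -/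
/-!
Among the points strictly between `p i` and `p k`, take the first one, `m`, at which the slope
seen from `p i` is maximal. Every earlier point has a smaller slope, so `p i` sees `p m`; a later
point seen from `p i` would have a larger slope, so `m` is the last point `p i` sees. Since `p i`
does not see `p k`, some point between them has slope at least that of `p k`, hence so does `p m`,
i.e. `p m` lies on or above `p i p k`. The claim for `j'` is the mirror image under
`t ↦ (-x (rev t), y (rev t))`, which preserves the orientation expression.
-/

theorem Finset.exists_first_argmax {α β : Type*} [LinearOrder α] [LinearOrder β] {s : Finset α}
    (hs : s.Nonempty) (f : α → β) :
    ∃ m ∈ s, (∀ t ∈ s, f t ≤ f m) ∧ ∀ t ∈ s, t < m → f t < f m := by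
  obtain ⟨m₀, hm₀, hmax⟩ := s.exists_max_image f hs
  have hne : (s.filter fun t => f t = f m₀).Nonempty := ⟨m₀, Finset.mem_filter.2 ⟨hm₀, rfl⟩⟩
  obtain ⟨hm, hfm⟩ := Finset.mem_filter.1 (Finset.min'_mem _ hne)
  refine ⟨_, hm, fun t ht => (hmax t ht).trans_eq hfm.symm, fun t ht htm => ?_⟩
  refine ((hmax t ht).trans_eq hfm.symm).lt_of_ne fun hft => ?_
  exact (Finset.min'_le _ t (Finset.mem_filter.2 ⟨ht, hft.trans hfm⟩)).not_gt htm

section Terrain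

variable {n : ℕ} (x y : Fin n → ℝ)

theorem sees_iff_forall_strictlyBelow {i k : Fin n} :
    Sees x y i k ↔ ∀ j : Fin n, i < j → j < k → StrictlyBelow x y i j k := by
  refine ⟨?_, Or.inr⟩
  rintro (hk | h) j hij hjk
  · have := Fin.lt_def.1 hij
    have := Fin.lt_def.1 hjk
    omega
  · exact h j hij hjk

theorem onOrAbove_iff_not_strictlyBelow {i j k : Fin n} :
    OnOrAbove x y i j k ↔ ¬ StrictlyBelow x y i j k :=
  not_lt.symm

noncomputable def terrainSlope (a b : Fin n) : ℝ :=
  (y b - y a) / (x b - x a)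

theorem strictlyBelow_iff_terrainSlope_lt {i j k : Fin n} (hij : x i < x j) (hik : x i < x k) :
    StrictlyBelow x y i j k ↔ terrainSlope x y i j < terrainSlope x y i k := by
  unfold StrictlyBelow terrainSlope
  rw [div_lt_div_iff₀ (sub_pos.2 hij) (sub_pos.2 hik)]
  constructor <;> intro h <;> linarith

theorem onOrAbove_iff_terrainSlope_le {i j k : Fin n} (hij : x i < x j) (hik : x i < x k) :
    OnOrAbove x y i j k ↔ terrainSlope x y i k ≤ terrainSlope x y i j := by
  rw [onOrAbove_iff_not_strictlyBelow, strictlyBelow_iff_terrainSlope_lt x y hij hik, not_lt]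

theorem strictlyBelow_reflect {i j k : Fin n} :
    StrictlyBelow (fun t => -x t.rev) (fun t => y t.rev) k.rev j.rev i.rev ↔
      StrictlyBelow x y i j k := by
  unfold StrictlyBelow
  simp only [Fin.rev_rev]
  ring_nf

theorem sees_reflect {i k : Fin n} :
    Sees (fun t => -x t.rev) (fun t => y t.rev) k.rev i.rev ↔ Sees x y i k := by
  rw [sees_iff_forall_strictlyBelow, sees_iff_forall_strictlyBelow]
  constructor
  · intro h j hij hjk
    exact (strictlyBelow_reflect x y).1 (h j.rev (Fin.rev_lt_rev.2 hjk) (Fin.rev_lt_rev.2 hij))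
  · intro h j hkj hji
    rw [← Fin.rev_rev j, strictlyBelow_reflect]
    exact h _ (Fin.lt_rev_iff.1 hji) (Fin.rev_lt_iff.1 hkj)

theorem onOrAbove_reflect {i j k : Fin n} :
    OnOrAbove (fun t => -x t.rev) (fun t => y t.rev) k.rev j.rev i.rev ↔ OnOrAbove x y i j k := by
  rw [onOrAbove_iff_not_strictlyBelow, onOrAbove_iff_not_strictlyBelow, strictlyBelow_reflect]

variable {x}

theorem StrictMono.neg_comp_rev (hx : StrictMono x) : StrictMono fun t : Fin n => -x t.rev :=
  fun _ _ hab => neg_lt_neg (hx (Fin.rev_lt_rev.2 hab))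

theorem onOrAbove_of_last_seen (hx : StrictMono x) {i j k : Fin n} (hnsee : ¬ Sees x y i k)
    (hij : i < j) (hjk : j < k) (hsees : Sees x y i j)
    (hjmax : ∀ j₂ : Fin n, i < j₂ → j₂ < k → Sees x y i j₂ → j₂ ≤ j) :
    OnOrAbove x y i j k := by
  obtain ⟨t, hit, htk, ht⟩ : ∃ t, i < t ∧ t < k ∧ OnOrAbove x y i t k := by
    simpa [sees_iff_forall_strictlyBelow, onOrAbove_iff_not_strictlyBelow] using hnsee
  obtain ⟨m, hm, hmax, hfirst⟩ :=
    Finset.exists_first_argmax ⟨t, Finset.mem_Ioo.2 ⟨hit, htk⟩⟩ (terrainSlope x y i)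
  obtain ⟨him, hmk⟩ := Finset.mem_Ioo.1 hm
  have hsees_m : Sees x y i m := (sees_iff_forall_strictlyBelow x y).2 fun s his hsm =>
    (strictlyBelow_iff_terrainSlope_lt x y (hx his) (hx him)).2
      (hfirst s (Finset.mem_Ioo.2 ⟨his, hsm.trans hmk⟩) hsm)
  have hjm : j = m := by
    refine le_antisymm ?_ (hjmax m him hmk hsees_m)
    by_contra! hmj
    have := (strictlyBelow_iff_terrainSlope_lt x y (hx him) (hx hij)).1
      ((sees_iff_forall_strictlyBelow x y).1 hsees m him hmj)
    exact this.not_ge (hmax j (Finset.mem_Ioo.2 ⟨hij, hjk⟩))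
  subst hjm
  rw [onOrAbove_iff_terrainSlope_le x y (hx hij) (hx (hij.trans hjk))]
  calc terrainSlope x y i k ≤ terrainSlope x y i t :=
        (onOrAbove_iff_terrainSlope_le x y (hx hit) (hx (hit.trans htk))).1 ht
    _ ≤ terrainSlope x y i j := hmax t (Finset.mem_Ioo.2 ⟨hit, htk⟩)

theorem onOrAbove_of_first_seeing (hx : StrictMono x) {i j k : Fin n} (hnsee : ¬ Sees x y i k)
    (hij : i < j) (hjk : j < k) (hsees : Sees x y j k)
    (hjmin : ∀ j₂ : Fin n, i < j₂ → j₂ < k → Sees x y j₂ k → j ≤ j₂) :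
    OnOrAbove x y i j k := by
  rw [← onOrAbove_reflect]
  refine onOrAbove_of_last_seen _ hx.neg_comp_rev (by rwa [sees_reflect])
    (Fin.rev_lt_rev.2 hjk) (Fin.rev_lt_rev.2 hij) (by rwa [sees_reflect]) fun j₂ h₁ h₂ hs => ?_
  rw [← Fin.rev_rev j₂, sees_reflect] at hs
  exact Fin.le_rev_iff.2 (hjmin _ (Fin.lt_rev_iff.1 h₂) (Fin.rev_lt_iff.1 h₁) hs)

end Terrain

theorem designated_blockers_on_or_above_general {n : ℕ} (x y : Fin n → ℝ) (hx : StrictMono x)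
    (i k : Fin n) (hnsee : ¬ Sees x y i k)
    (j : Fin n) (hij : i < j) (hjk : j < k) (hsees_ij : Sees x y i j)
    (hjmax : ∀ j₂ : Fin n, i < j₂ → j₂ < k → Sees x y i j₂ → j₂ ≤ j)
    (j' : Fin n) (hij' : i < j') (hj'k : j' < k) (hsees_j'k : Sees x y j' k)
    (hj'min : ∀ j₂ : Fin n, i < j₂ → j₂ < k → Sees x y j₂ k → j' ≤ j₂) :
    OnOrAbove x y i j k ∧ OnOrAbove x y i j' k :=
  ⟨onOrAbove_of_last_seen y hx hnsee hij hjk hsees_ij hjmax,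
    onOrAbove_of_first_seeing y hx hnsee hij' hj'k hsees_j'k hj'min⟩

theorem designated_blockers_on_or_above {n : ℕ} (x y : Fin n → ℝ) (hx : StrictMono x)
    (i k : Fin n) (hik : (i : ℕ) + 2 ≤ (k : ℕ)) (hnsee : ¬ Sees x y i k)
    (j : Fin n) (hij : i < j) (hjk : j < k) (hsees_ij : Sees x y i j)
    (hjmax : ∀ j₂ : Fin n, i < j₂ → j₂ < k → Sees x y i j₂ → j₂ ≤ j)
    (j' : Fin n) (hij' : i < j') (hj'k : j' < k) (hsees_j'k : Sees x y j' k)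
    (hj'min : ∀ j₂ : Fin n, i < j₂ → j₂ < k → Sees x y j₂ k → j' ≤ j₂) :
    OnOrAbove x y i j k ∧ OnOrAbove x y i j' k :=
  designated_blockers_on_or_above_general x y hx i k hnsee j hij hjk hsees_ij hjmax j' hij' hj'k
    hsees_j'k hj'min
end

section
/- Let x_0 < x_1 < … < x_6 be real numbers with d_{0,1}·d_{2,3}·d_{3,4}·d_{5,6} ≤ d_{1,2}·d_{4,5}·d_{0,3}·d_{3,6}, where d_{i,j} = x_j − x_i. Then there exist NO real numbers y_0, …, y_6 satisfying simultaneously: p_3 strictly below the segment p_0 p_4, p_3 strictly below the segment p_2 p_6, p_5 strictly below the segment p_3 p_6, p_1 on or above the segment p_0 p_2, p_3 on or above the segment p_1 p_5, and p_5 on or above the segment p_4 p_6 (where p_i = (x_i, y_i)). In particular, no y satisfies all six G'-constraints with the above/below conditions strict. -/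
/-!
The six constraints are linear in `y`, so by Farkas' lemma they are infeasible exactly when some
nonnegative combination of the six constraint expressions vanishes identically in `y` while giving
positive weight to a strict constraint. Such a combination exists with weights that are products of
the gaps `d_{i,j}`, except for the weight of the third constraint, which is
`d_{1,2} d_{4,5} d_{0,3} d_{3,6} - d_{0,1} d_{2,3} d_{3,4} d_{5,6}`: the hypothesis on the `x_i` is
precisely what makes it nonnegative.
-/

/-- `(x_k - x_i)` times the height of the chord `p_i p_k` above `p_j` at `x = x_j`. -/
def chordExcess (xi xj xk yi yj yk : ℝ) : ℝ :=
  (xk - xj) * yi - (xk - xi) * yj + (xj - xi) * yk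

theorem chordExcess_certificate (x0 x1 x2 x3 x4 x5 x6 y0 y1 y2 y3 y4 y5 y6 : ℝ) :
    (x2 - x1) * (x5 - x3) * (x6 - x5) * (x6 - x3) * chordExcess x0 x3 x4 y0 y3 y4
      + (x4 - x3) * (x1 - x0) * (x5 - x3) * (x6 - x5) * chordExcess x2 x3 x6 y2 y3 y6
      + ((x2 - x1) * (x5 - x4) * (x3 - x0) * (x6 - x3)
          - (x1 - x0) * (x3 - x2) * (x4 - x3) * (x6 - x5)) * chordExcess x3 x5 x6 y3 y5 y6 =
    (x4 - x3) * (x5 - x3) * (x6 - x5) * (x6 - x3) * chordExcess x0 x1 x2 y0 y1 y2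
      + (x4 - x3) * (x2 - x0) * (x6 - x5) * (x6 - x3) * chordExcess x1 x3 x5 y1 y3 y5
      + (x2 - x1) * (x3 - x0) * (x6 - x3) * (x5 - x3) * chordExcess x4 x5 x6 y4 y5 y6 := by
  unfold chordExcess
  ring

theorem false_of_signed_combination {a b c d e f A B C D E F : ℝ}
    (h : a * A + b * B + c * C = d * D + e * E + f * F)
    (ha : 0 < a) (hb : 0 ≤ b) (hc : 0 ≤ c) (hd : 0 ≤ d) (he : 0 ≤ e) (hf : 0 ≤ f)
    (hA : 0 < A) (hB : 0 < B) (hC : 0 < C) (hD : D ≤ 0) (hE : E ≤ 0) (hF : F ≤ 0) : False := by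
  have hpos : 0 < a * A + b * B + c * C :=
    add_pos_of_pos_of_nonneg (add_pos_of_pos_of_nonneg (mul_pos ha hA) (mul_nonneg hb hB.le))
      (mul_nonneg hc hC.le)
  have hnonpos : d * D + e * E + f * F ≤ 0 :=
    add_nonpos (add_nonpos (mul_nonpos_of_nonneg_of_nonpos hd hD)
      (mul_nonpos_of_nonneg_of_nonpos he hE)) (mul_nonpos_of_nonneg_of_nonpos hf hF)
  exact (hpos.trans_le (h ▸ hnonpos)).false

theorem no_y_when_inequality_fails (x0 x1 x2 x3 x4 x5 x6 : ℝ)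
    (h01 : x0 < x1) (h12 : x1 < x2) (h23 : x2 < x3)
    (h34 : x3 < x4) (h45 : x4 < x5) (h56 : x5 < x6)
    (hd : (x1 - x0) * (x3 - x2) * (x4 - x3) * (x6 - x5) ≤
          (x2 - x1) * (x5 - x4) * (x3 - x0) * (x6 - x3)) :
    ¬ ∃ y0 y1 y2 y3 y4 y5 y6 : ℝ,
      ((x4 - x3) * y0 - (x4 - x0) * y3 + (x3 - x0) * y4 > 0) ∧
      ((x6 - x3) * y2 - (x6 - x2) * y3 + (x3 - x2) * y6 > 0) ∧
      ((x6 - x5) * y3 - (x6 - x3) * y5 + (x5 - x3) * y6 > 0) ∧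
      ((x2 - x1) * y0 - (x2 - x0) * y1 + (x1 - x0) * y2 ≤ 0) ∧
      ((x5 - x3) * y1 - (x5 - x1) * y3 + (x3 - x1) * y5 ≤ 0) ∧
      ((x6 - x5) * y4 - (x6 - x4) * y5 + (x5 - x4) * y6 ≤ 0) := by
  rintro ⟨y0, y1, y2, y3, y4, y5, y6, h034, h236, h356, h012, h135, h456⟩
  have d01 : 0 < x1 - x0 := sub_pos.2 h01
  have d12 : 0 < x2 - x1 := sub_pos.2 h12
  have d34 : 0 < x4 - x3 := sub_pos.2 h34
  have d56 : 0 < x6 - x5 := sub_pos.2 h56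
  have d02 : 0 < x2 - x0 := sub_pos.2 (h01.trans h12)
  have d03 : 0 < x3 - x0 := sub_pos.2 ((h01.trans h12).trans h23)
  have d35 : 0 < x5 - x3 := sub_pos.2 (h34.trans h45)
  have d36 : 0 < x6 - x3 := sub_pos.2 ((h34.trans h45).trans h56)
  exact false_of_signed_combination
    (chordExcess_certificate x0 x1 x2 x3 x4 x5 x6 y0 y1 y2 y3 y4 y5 y6)
    (by positivity) (by positivity) (sub_nonneg.2 hd) (by positivity) (by positivity)
    (by positivity) h034 h236 h356 h012 h135 h456
end

section
/- For any strictly increasing x : Fin 35 → ℝ and any y : Fin 35 → ℝ, it is NOT the case that for every one of the five color tuples (c_0, …, c_6) the points q_i = (x_{c_i}, y_{c_i}) simultaneously satisfy: q_3 strictly below the segment q_0 q_4, q_3 strictly below the segment q_2 q_6, q_5 strictly below the segment q_3 q_6, q_1 on or above the segment q_0 q_2, q_3 on or above the segment q_1 q_5, and q_5 on or above the segment q_4 q_6. -/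
/-- The six G'-constraints for seven points `q i = (a i, b i)`:
`q 3` strictly below segment `q 0 q 4`, `q 3` strictly below `q 2 q 6`,
`q 5` strictly below `q 3 q 6`, `q 1` on or above `q 0 q 2`,
`q 3` on or above `q 1 q 5`, and `q 5` on or above `q 4 q 6`. -/
def Constraints (a0 a1 a2 a3 a4 a5 a6 b0 b1 b2 b3 b4 b5 b6 : ℝ) : Prop :=
  ((a4 - a3) * b0 - (a4 - a0) * b3 + (a3 - a0) * b4 > 0) ∧
  ((a6 - a3) * b2 - (a6 - a2) * b3 + (a3 - a2) * b6 > 0) ∧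
  ((a6 - a5) * b3 - (a6 - a3) * b5 + (a5 - a3) * b6 > 0) ∧
  ((a2 - a1) * b0 - (a2 - a0) * b1 + (a1 - a0) * b2 ≤ 0) ∧
  ((a5 - a3) * b1 - (a5 - a1) * b3 + (a3 - a1) * b5 ≤ 0) ∧
  ((a6 - a5) * b4 - (a6 - a4) * b5 + (a5 - a4) * b6 ≤ 0)

/-! For one color with abscissae `a0 < ⋯ < a6`, a positivity certificate turns the six
constraints into `(a2 - a1)(a5 - a4)(a3 - a0)(a6 - a3) < (a1 - a0)(a3 - a2)(a4 - a3)(a6 - a5)`.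
Multiplying over the five colors, the twenty "outer" gaps have a smaller product than the twenty
"inner" ones. But the inner gaps can be matched injectively with outer gaps (of possibly
different colors) containing them, which gives the opposite inequality. -/

open Finset Function

/-- Twice the signed area of the triangle `(ai, bi), (aj, bj), (ak, bk)`: the expression
occurring in `Constraints`. -/
def cross (ai aj ak bi bj bk : ℝ) : ℝ := (ak - aj) * bi - (ak - ai) * bj + (aj - ai) * bk

theorem Constraints.outer_prod_lt_inner_prod {a0 a1 a2 a3 a4 a5 a6 b0 b1 b2 b3 b4 b5 b6 : ℝ}
    (h01 : a0 < a1) (h12 : a1 < a2) (h23 : a2 < a3) (h34 : a3 < a4) (h45 : a4 < a5)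
    (h56 : a5 < a6) (hc : Constraints a0 a1 a2 a3 a4 a5 a6 b0 b1 b2 b3 b4 b5 b6) :
    (a2 - a1) * (a5 - a4) * (a3 - a0) * (a6 - a3) <
      (a1 - a0) * (a3 - a2) * (a4 - a3) * (a6 - a5) := by
  obtain ⟨h034, h236, h356, h012, h135, h456⟩ :
      0 < cross a0 a3 a4 b0 b3 b4 ∧ 0 < cross a2 a3 a6 b2 b3 b6 ∧ 0 < cross a3 a5 a6 b3 b5 b6 ∧
      cross a0 a1 a2 b0 b1 b2 ≤ 0 ∧ cross a1 a3 a5 b1 b3 b5 ≤ 0 ∧ cross a4 a5 a6 b4 b5 b6 ≤ 0 := hc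
  have certificate :
      ((a1 - a0) * (a3 - a2) * (a4 - a3) * (a6 - a5) -
        (a2 - a1) * (a5 - a4) * (a3 - a0) * (a6 - a3)) * cross a3 a5 a6 b3 b5 b6 =
      (a6 - a5) * ((a2 - a1) * (a5 - a3) * (a6 - a3) * cross a0 a3 a4 b0 b3 b4 +
        (a1 - a0) * (a4 - a3) * (a5 - a3) * cross a2 a3 a6 b2 b3 b6 +
        (a4 - a3) * (a5 - a3) * (a6 - a3) * -cross a0 a1 a2 b0 b1 b2 +
        (a2 - a0) * (a4 - a3) * (a6 - a3) * -cross a1 a3 a5 b1 b3 b5) +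
      (a3 - a0) * (a2 - a1) * (a5 - a3) * (a6 - a3) * -cross a4 a5 a6 b4 b5 b6 := by
    unfold cross; ring
  -- sign facts on the atoms of the certificate, which `positivity` picks up
  have := sub_pos.2 h01; have := sub_pos.2 h12; have := sub_pos.2 (h01.trans h12)
  have := sub_pos.2 ((h01.trans h12).trans h23); have := sub_pos.2 h34
  have := sub_pos.2 (h34.trans h45); have := sub_pos.2 ((h34.trans h45).trans h56)
  have := sub_pos.2 h56
  have := neg_nonneg.2 h012; have := neg_nonneg.2 h135; have := neg_nonneg.2 h456
  rw [← sub_pos]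
  refine pos_of_mul_pos_left ?_ h356.le
  rw [certificate]
  positivity

variable {n : ℕ}

def gap (x : Fin n → ℝ) (I : Fin n × Fin n) : ℝ := x I.2 - x I.1

theorem gap_pos {x : Fin n → ℝ} (hx : StrictMono x) {I : Fin n × Fin n} (h : I.1 < I.2) :
    0 < gap x I :=
  sub_pos.2 (hx h)

theorem gap_le_gap {x : Fin n → ℝ} (hx : Monotone x) {I J : Fin n × Fin n} (h₁ : J.1 ≤ I.1)
    (h₂ : I.2 ≤ J.2) : gap x I ≤ gap x J :=
  sub_le_sub (hx h₂) (hx h₁)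

theorem prod_le_prod_of_injective {ι R : Type*} [Fintype ι] [CommMonoidWithZero R]
    [PartialOrder R] [ZeroLEOneClass R] [PosMulMono R] {f g : ι → R} {σ : ι → ι}
    (hσ : Injective σ) (hf : ∀ i, 0 ≤ f i) (hfg : ∀ i, f i ≤ g (σ i)) :
    ∏ i, f i ≤ ∏ i, g i :=
  calc ∏ i, f i ≤ ∏ i, g (σ i) := Finset.prod_le_prod (fun i _ ↦ hf i) (fun i _ ↦ hfg i)
    _ = ∏ i, g i := Fintype.prod_bijective σ (Finite.injective_iff_bijective.1 hσ) _ _ fun _ ↦ rfl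

def innerIntervals (t : Fin 7 → Fin n) : Fin 4 → Fin n × Fin n :=
  ![(t 0, t 1), (t 2, t 3), (t 3, t 4), (t 5, t 6)]

def outerIntervals (t : Fin 7 → Fin n) : Fin 4 → Fin n × Fin n :=
  ![(t 1, t 2), (t 4, t 5), (t 0, t 3), (t 3, t 6)]

theorem innerIntervals_fst_lt_snd {t : Fin 7 → Fin n} (ht : StrictMono t) (k : Fin 4) :
    (innerIntervals t k).1 < (innerIntervals t k).2 := by
  fin_cases k <;> exact ht (by decide)

theorem outerIntervals_fst_lt_snd {t : Fin 7 → Fin n} (ht : StrictMono t) (k : Fin 4) :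
    (outerIntervals t k).1 < (outerIntervals t k).2 := by
  fin_cases k <;> exact ht (by decide)

theorem prod_gap_outer_lt_prod_gap_inner {x y : Fin n → ℝ} {t : Fin 7 → Fin n}
    (hx : StrictMono x) (ht : StrictMono t)
    (hc : Constraints (x (t 0)) (x (t 1)) (x (t 2)) (x (t 3)) (x (t 4)) (x (t 5)) (x (t 6))
      (y (t 0)) (y (t 1)) (y (t 2)) (y (t 3)) (y (t 4)) (y (t 5)) (y (t 6))) :
    ∏ k, gap x (outerIntervals t k) < ∏ k, gap x (innerIntervals t k) := by
  have h := hx.comp ht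
  simp only [Fin.prod_univ_four, gap, outerIntervals, innerIntervals]
  exact hc.outer_prod_lt_inner_prod (h (by decide)) (h (by decide)) (h (by decide))
    (h (by decide)) (h (by decide)) (h (by decide))

def colors : Fin 5 → Fin 7 → Fin 35 :=
  ![![0, 1, 6, 7, 8, 11, 12], ![2, 3, 19, 20, 21, 24, 25], ![4, 5, 16, 17, 18, 29, 30],
    ![9, 10, 13, 14, 15, 31, 32], ![22, 23, 26, 27, 28, 33, 34]]

-- `nesting (c, k) = (c', k')`: inner interval `k` of color `c` lies in outer interval `k'` of `c'`.
def nesting (p : Fin 5 × Fin 4) : Fin 5 × Fin 4 :=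
  ![![(0, 2), (2, 0), (0, 3), (3, 0)], ![(0, 0), (3, 1), (1, 3), (4, 0)],
    ![(2, 2), (1, 0), (2, 3), (4, 1)], ![(0, 1), (3, 2), (1, 2), (3, 3)],
    ![(1, 1), (4, 2), (2, 1), (4, 3)]] p.1 p.2

theorem colors_strictMono (c : Fin 5) : StrictMono (colors c) := by
  rw [Fin.strictMono_iff_lt_succ]; revert c; decide

theorem nesting_injective : Injective nesting := by decide

theorem nesting_spec (p : Fin 5 × Fin 4) :
    (outerIntervals (colors (nesting p).1) (nesting p).2).1 ≤
        (innerIntervals (colors p.1) p.2).1 ∧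
      (innerIntervals (colors p.1) p.2).2 ≤
        (outerIntervals (colors (nesting p).1) (nesting p).2).2 := by
  revert p; decide

theorem not_all_colors_constrained (x y : Fin 35 → ℝ) (hx : StrictMono x) :
    ¬ (Constraints (x 0) (x 1) (x 6) (x 7) (x 8) (x 11) (x 12)
         (y 0) (y 1) (y 6) (y 7) (y 8) (y 11) (y 12) ∧
       Constraints (x 2) (x 3) (x 19) (x 20) (x 21) (x 24) (x 25)
         (y 2) (y 3) (y 19) (y 20) (y 21) (y 24) (y 25) ∧
       Constraints (x 4) (x 5) (x 16) (x 17) (x 18) (x 29) (x 30)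
         (y 4) (y 5) (y 16) (y 17) (y 18) (y 29) (y 30) ∧
       Constraints (x 9) (x 10) (x 13) (x 14) (x 15) (x 31) (x 32)
         (y 9) (y 10) (y 13) (y 14) (y 15) (y 31) (y 32) ∧
       Constraints (x 22) (x 23) (x 26) (x 27) (x 28) (x 33) (x 34)
         (y 22) (y 23) (y 26) (y 27) (y 28) (y 33) (y 34)) := by
  rintro ⟨h0, h1, h2, h3, h4⟩
  have hlt : ∏ c, ∏ k, gap x (outerIntervals (colors c) k) <
      ∏ c, ∏ k, gap x (innerIntervals (colors c) k) := by
    refine prod_lt_prod_of_nonempty (fun c _ ↦ ?_) (fun c _ ↦ ?_) univ_nonempty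
    · exact prod_pos fun k _ ↦ gap_pos hx (outerIntervals_fst_lt_snd (colors_strictMono c) k)
    · refine prod_gap_outer_lt_prod_gap_inner (y := y) hx (colors_strictMono c) ?_
      fin_cases c <;> assumption
  have hle : ∏ c, ∏ k, gap x (innerIntervals (colors c) k) ≤
      ∏ c, ∏ k, gap x (outerIntervals (colors c) k) := by
    simp only [← Fintype.prod_prod_type']
    exact prod_le_prod_of_injective nesting_injective
      (fun p ↦ (gap_pos hx (innerIntervals_fst_lt_snd (colors_strictMono p.1) p.2)).le)
      (fun p ↦ gap_le_gap hx.monotone (nesting_spec p).1 (nesting_spec p).2)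
  exact hlt.not_ge hle
end
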